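/- arXiv:2409.13515 — 6 statements merged into one kernel-verified Lean document; each statement's English description precedes it below -/
import Mathlib

section
/- Let p be an odd prime, ℘ an odd prime distinct from p, m ≥ 1, with p a primitive root modulo ℘^m. Let q = p^{φ(℘^m)} and let ξ ∈ 𝔽_q be a primitive ℘^m-th root of unity. Then for any nonnegative integer j: Tr_{𝔽_q/𝔽_p}(ξ^j) = (℘−1)℘^{m−1} if ℘^m ∣ j; Tr(ξ^j) = −℘^{m−1} if ℘^{m−1} ∣ j but ℘^m ∤ j; and Tr(ξ^j) = 0 otherwise. -/
open Finset

/-!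
Writing `N = ℘ ^ m`, the trace of `z = ξ ^ j` is the sum of its Frobenius conjugates
`z ^ (p ^ i)` for `i < φ N`. Since `p` generates `(ZMod N)ˣ`, the exponents `p ^ i` run over
the residues coprime to `N`, so the trace is the Ramanujan sum `∑_{t < N, ℘ ∤ t} z ^ t`: the
full geometric sum (`N` or `0`) minus the sum over multiples of `℘`, which is the geometric sum
of `z ^ ℘` of length `℘ ^ (m - 1)`.
-/

theorem sum_range_orderOf_pow_eq_sum_univ {G M : Type*} [Group G] [Fintype G] [AddCommMonoid M]
    {g : G} (hg : orderOf g = Fintype.card G) (f : G → M) :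
    ∑ i ∈ range (orderOf g), f (g ^ i) = ∑ x, f x := by
  classical
  have hinj : Set.InjOn (g ^ ·) (range (orderOf g)) := by
    simpa [Set.InjOn] using pow_injOn_Iio_orderOf (x := g)
  rw [← sum_image hinj, eq_univ_of_card ((range (orderOf g)).image (g ^ ·))
    (by rw [card_image_of_injOn hinj, card_range, hg])]

theorem sum_units_pow_val {R : Type*} [Semiring R] (N : ℕ) [NeZero N] (z : R) :
    ∑ v : (ZMod N)ˣ, z ^ (v : ZMod N).val = ∑ t ∈ range N with t.Coprime N, z ^ t := by
  refine sum_bij (fun v _ => (v : ZMod N).val) (fun v _ => ?_) (fun v _ w _ h => ?_)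
    (fun t ht => ?_) (fun _ _ => rfl)
  · exact mem_filter.2 ⟨mem_range.2 (ZMod.val_lt _), ZMod.val_coe_unit_coprime v⟩
  · exact Units.ext (ZMod.val_injective N h)
  · obtain ⟨htN, hcop⟩ := mem_filter.1 ht
    exact ⟨ZMod.unitOfCoprime t hcop, mem_univ _, by
      simp [ZMod.val_natCast_of_lt (mem_range.1 htN)]⟩

namespace FiniteField

theorem algebraMap_trace_eq_sum_coprime (K L : Type*) [Field K] [Field L] [Finite L] [Algebra K L]
    {N : ℕ} [NeZero N] (hord : orderOf (Nat.card K : ZMod N) = N.totient)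
    (hdeg : Module.finrank K L = N.totient) {z : L} (hz : z ^ N = 1) :
    algebraMap K L (Algebra.trace K L z) = ∑ t ∈ range N with t.Coprime N, z ^ t := by
  have hunit : IsUnit (Nat.card K : ZMod N) :=
    (orderOf_pos_iff.1 (hord ▸ Nat.totient_pos.2 (Nat.pos_of_neZero N))).isUnit
  have hgen : orderOf hunit.unit = Fintype.card (ZMod N)ˣ := by
    rw [ZMod.card_units_eq_totient, ← hord, ← orderOf_units, IsUnit.unit_spec]
  rw [algebraMap_trace_eq_sum_pow, hdeg, ← ZMod.card_units_eq_totient, ← hgen,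
    ← sum_units_pow_val, ← sum_range_orderOf_pow_eq_sum_univ hgen]
  refine sum_congr rfl fun i _ => ?_
  rw [Units.val_pow_eq_pow_val, IsUnit.unit_spec, ← Nat.cast_pow, ZMod.val_natCast,
    ← pow_eq_pow_mod _ hz]

end FiniteField

theorem sum_range_mul_filter_dvd {M : Type*} [AddCommMonoid M] {a : ℕ} (ha : a ≠ 0) (n : ℕ)
    (f : ℕ → M) : ∑ t ∈ range (a * n) with a ∣ t, f t = ∑ s ∈ range n, f (a * s) := by
  rw [← sum_image (g := (a * ·)) (by simp [Set.InjOn, ha])]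
  congr 1
  ext t
  simp only [mem_filter, mem_range, mem_image]
  constructor
  · rintro ⟨ht, s, rfl⟩
    exact ⟨s, by simpa [Nat.mul_lt_mul_left (Nat.pos_of_ne_zero ha)] using ht, rfl⟩
  · rintro ⟨s, hs, rfl⟩
    exact ⟨by simpa [Nat.mul_lt_mul_left (Nat.pos_of_ne_zero ha)] using hs, dvd_mul_right _ _⟩

theorem geom_sum_of_pow_eq_one {K : Type*} [Field K] [DecidableEq K] {z : K} {n : ℕ}
    (hz : z ^ n = 1) : ∑ i ∈ range n, z ^ i = if z = 1 then (n : K) else 0 := by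
  split_ifs with h
  · simp [h]
  · rw [geom_sum_eq h, hz, sub_self, zero_div]

theorem sum_range_coprime_prime_pow_pow {K : Type*} [Field K] [DecidableEq K] {ℓ : ℕ}
    (hℓ : ℓ.Prime) (k : ℕ) {z : K} (hz : z ^ ℓ ^ (k + 1) = 1) :
    ∑ t ∈ range (ℓ ^ (k + 1)) with t.Coprime (ℓ ^ (k + 1)), z ^ t =
      (if z = 1 then ((ℓ ^ (k + 1) : ℕ) : K) else 0) -
        (if z ^ ℓ = 1 then ((ℓ ^ k : ℕ) : K) else 0) := by
  have hzℓ : (z ^ ℓ) ^ ℓ ^ k = 1 := by rwa [← pow_mul, ← pow_succ']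
  have hmul : ∑ t ∈ range (ℓ ^ (k + 1)) with ℓ ∣ t, z ^ t =
      ∑ s ∈ range (ℓ ^ k), (z ^ ℓ) ^ s := by
    simp_rw [pow_succ' ℓ k, sum_range_mul_filter_dvd hℓ.ne_zero, pow_mul]
  simp_rw [Nat.coprime_pow_right_iff k.succ_pos, Nat.coprime_comm, hℓ.coprime_iff_not_dvd]
  rw [← geom_sum_of_pow_eq_one hz, ← geom_sum_of_pow_eq_one hzℓ, ← hmul,
    ← sum_filter_add_sum_filter_not (range _) (ℓ ∣ ·), add_sub_cancel_left]

theorem IsPrimitiveRoot.pow_pow_eq_one_iff_dvd {M : Type*} [CommMonoid M] {ξ : M} {ℓ n : ℕ}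
    (hξ : IsPrimitiveRoot ξ (ℓ * n)) (hℓ : ℓ ≠ 0) (j : ℕ) :
    (ξ ^ j) ^ ℓ = 1 ↔ n ∣ j := by
  rw [← pow_mul, hξ.pow_eq_one_iff_dvd, mul_comm j,
    Nat.mul_dvd_mul_iff_left (Nat.pos_of_ne_zero hℓ)]

theorem stmt_6_general (p ℘ : ℕ) (hp : p.Prime) (h℘ : ℘.Prime) (m : ℕ) (hm : 1 ≤ m)
    (hprim : orderOf (p : ZMod (℘ ^ m)) = (℘ ^ m).totient)
    (F : Type*) [Field F] [Fintype F] [Algebra (ZMod p) F]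
    (hcard : Fintype.card F = p ^ (℘ ^ m).totient)
    (ξ : F) (hξ : IsPrimitiveRoot ξ (℘ ^ m)) (j : ℕ) :
    Algebra.trace (ZMod p) F (ξ ^ j) =
      if ℘ ^ m ∣ j then (((℘ - 1) * ℘ ^ (m - 1) : ℕ) : ZMod p)
      else if ℘ ^ (m - 1) ∣ j then -((℘ ^ (m - 1) : ℕ) : ZMod p)
      else 0 := by
  have := Fact.mk hp
  obtain ⟨k, rfl⟩ := Nat.exists_eq_add_of_le' hm
  have := NeZero.mk (pow_ne_zero (k + 1) h℘.ne_zero)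
  have hdeg : Module.finrank (ZMod p) F = (℘ ^ (k + 1)).totient := by
    have hcard' := Module.card_eq_pow_finrank (K := ZMod p) (V := F)
    rw [ZMod.card, hcard] at hcard'
    exact (Nat.pow_right_injective hp.two_le hcard').symm
  have hz : (ξ ^ j) ^ ℘ ^ (k + 1) = 1 := by
    rw [← pow_mul, mul_comm, pow_mul, hξ.pow_eq_one, one_pow]
  classical
  have htr := FiniteField.algebraMap_trace_eq_sum_coprime (ZMod p) F
    (by rwa [Nat.card_zmod]) hdeg hz
  have hξ' : IsPrimitiveRoot ξ (℘ * ℘ ^ k) := pow_succ' ℘ k ▸ hξ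
  rw [sum_range_coprime_prime_pow_pow h℘ k hz, hξ.pow_eq_one_iff_dvd,
    hξ'.pow_pow_eq_one_iff_dvd h℘.ne_zero] at htr
  apply (algebraMap (ZMod p) F).injective
  rw [htr, Nat.add_sub_cancel]
  split_ifs with hk1 hk
  · rw [map_natCast, Nat.sub_one_mul, ← pow_succ',
      Nat.cast_sub (Nat.pow_le_pow_right h℘.pos k.le_succ)]
  · exact absurd (dvd_trans (pow_dvd_pow ℘ k.le_succ) hk1) hk
  · simp
  · simp

theorem stmt_6 (p ℘ : ℕ) (hp : p.Prime) (h℘ : ℘.Prime) (hpodd : Odd p) (h℘odd : Odd ℘)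
    (hne : p ≠ ℘) (m : ℕ) (hm : 1 ≤ m)
    (hprim : orderOf (p : ZMod (℘ ^ m)) = (℘ ^ m).totient)
    (F : Type*) [Field F] [Fintype F] [Algebra (ZMod p) F]
    (hcard : Fintype.card F = p ^ (℘ ^ m).totient)
    (ξ : F) (hξ : IsPrimitiveRoot ξ (℘ ^ m)) (j : ℕ) :
    Algebra.trace (ZMod p) F (ξ ^ j) =
      if ℘ ^ m ∣ j then (((℘ - 1) * ℘ ^ (m - 1) : ℕ) : ZMod p)
      else if ℘ ^ (m - 1) ∣ j then -((℘ ^ (m - 1) : ℕ) : ZMod p)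
      else 0 :=
  stmt_6_general p ℘ hp h℘ m hm hprim F hcard ξ hξ j
end

section
/- Let p be an odd prime that is a primitive root modulo 4 (i.e., p ≡ 3 mod 4), q = p², ξ ∈ 𝔽_q a primitive 4-th root of unity, and χ the canonical additive character of 𝔽_q. For a = a₁ξ + a₂ξ² with a₁,a₂ ∈ 𝔽_p, the sum S₄(a) = Σ_{i=0}^{3} χ(aξ^i) equals ζ_p^{2a₁} + ζ_p^{−2a₁} + ζ_p^{2a₂} + ζ_p^{−2a₂}, where ζ_p = e^{2πi/p}. -/
/-!
Since `p ≡ 3 [MOD 4]`, the Frobenius sends `ξ` to `ξ ^ p = ξ ^ 3 = -ξ`, so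
`Tr ξ = ξ + ξ ^ p = 0`, while `Tr 1 = [𝔽_q : 𝔽_p] = 2`. Hence `Tr (c₁ ξ + c₂ ξ²) = -2 c₂`.
As `ξ² = -1`, the four elements `a ξ ^ i` are `a, a ξ, -a, -a ξ`, and `a ξ = -a₂ ξ + a₁ ξ²`,
so their traces are `-2a₂, -2a₁, 2a₂, 2a₁`.
-/

open Module

theorem Nat.mod_four_eq_three_of_orderOf_eq_two {n : ℕ} (h : orderOf (n : ZMod 4) = 2) :
    n % 4 = 3 := by
  rw [orderOf_eq_prime_iff, ← ZMod.natCast_mod n 4] at h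
  have : n % 4 < 4 := Nat.mod_lt _ (by norm_num)
  interval_cases n % 4 <;> revert h <;> decide

theorem Module.finrank_eq_of_card_eq_pow {K V : Type*} [Field K] [Fintype K] [AddCommGroup V]
    [Module K V] [Fintype V] {n : ℕ} (h : Fintype.card V = Fintype.card K ^ n) :
    finrank K V = n :=
  Nat.pow_right_injective Fintype.one_lt_card (card_eq_pow_finrank.symm.trans h)

namespace IsPrimitiveRoot

variable {R : Type*} [CommRing R] [IsDomain R] {ζ : R}

theorem sq_eq_neg_one (h : IsPrimitiveRoot ζ 4) : ζ ^ 2 = -1 :=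
  (h.pow_of_dvd two_ne_zero (by norm_num)).eq_neg_one_of_two_right

theorem pow_eq_neg_self_of_mod_four_eq_three (h : IsPrimitiveRoot ζ 4) {n : ℕ}
    (hn : n % 4 = 3) : ζ ^ n = -ζ := by
  rw [pow_eq_pow_mod n h.pow_eq_one, hn, pow_succ, h.sq_eq_neg_one, neg_one_mul]

end IsPrimitiveRoot

theorem FiniteField.trace_eq_zero_of_pow_card_eq_neg {K L : Type*} [Field K] [Field L]
    [Finite L] [Algebra K L] (hrank : finrank K L = 2) {x : L} (hx : x ^ Nat.card K = -x) :
    Algebra.trace K L x = 0 := by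
  apply FaithfulSMul.algebraMap_injective K L
  rw [algebraMap_trace_eq_sum_pow, hrank, Finset.sum_range_succ, Finset.sum_range_one]
  simp [hx]

theorem Algebra.trace_algebraMap_mul_add_algebraMap_mul_sq {K L : Type*} [Field K] [CommRing L]
    [Algebra K L] [Module.Free K L] {ξ : L} (hsq : ξ ^ 2 = -1) (htr : trace K L ξ = 0)
    (c₁ c₂ : K) :
    trace K L (algebraMap K L c₁ * ξ + algebraMap K L c₂ * ξ ^ 2) = -(finrank K L * c₂) := by
  simp only [← Algebra.smul_def, map_add, map_smul, hsq, map_neg, ← map_one (algebraMap K L),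
    trace_algebraMap, htr, smul_eq_mul, nsmul_eq_mul]
  ring

open Complex in
theorem stmt_8_general (p : ℕ) (hp : p.Prime)
    (hprim : orderOf (p : ZMod 4) = Nat.totient 4)
    (F : Type*) [Field F] [Fintype F] [Algebra (ZMod p) F]
    (hcard : Fintype.card F = p ^ 2)
    (ξ : F) (hξ : IsPrimitiveRoot ξ 4)
    (a : F) (a₁ a₂ : ZMod p)
    (ha : a = algebraMap (ZMod p) F a₁ * ξ + algebraMap (ZMod p) F a₂ * ξ ^ 2) :
    (∑ i ∈ Finset.range 4,
        Complex.exp (2 * Real.pi * I / p) ^ (Algebra.trace (ZMod p) F (a * ξ ^ i)).val) =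
      Complex.exp (2 * Real.pi * I / p) ^ ((2 * a₁ : ZMod p)).val
        + Complex.exp (2 * Real.pi * I / p) ^ ((-(2 * a₁) : ZMod p)).val
        + Complex.exp (2 * Real.pi * I / p) ^ ((2 * a₂ : ZMod p)).val
        + Complex.exp (2 * Real.pi * I / p) ^ ((-(2 * a₂) : ZMod p)).val := by
  have : Fact p.Prime := ⟨hp⟩
  have hsq := hξ.sq_eq_neg_one
  have hrank : finrank (ZMod p) F = 2 := finrank_eq_of_card_eq_pow (by rw [hcard, ZMod.card])
  have hp4 := Nat.mod_four_eq_three_of_orderOf_eq_two (hprim.trans (by decide))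
  have htr : Algebra.trace (ZMod p) F ξ = 0 :=
    FiniteField.trace_eq_zero_of_pow_card_eq_neg hrank
      (by rw [Nat.card_zmod]; exact hξ.pow_eq_neg_self_of_mod_four_eq_three hp4)
  have hTr := Algebra.trace_algebraMap_mul_add_algebraMap_mul_sq (K := ZMod p) hsq htr
  simp only [hrank, Nat.cast_ofNat] at hTr
  have haξ : a * ξ = algebraMap (ZMod p) F (-a₂) * ξ + algebraMap (ZMod p) F a₁ * ξ ^ 2 := by
    rw [ha, map_neg]
    linear_combination algebraMap (ZMod p) F a₂ * ξ * hsq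
  have h2 : a * ξ ^ 2 = -a := by rw [hsq, mul_neg_one]
  have h3 : a * ξ ^ 3 = -(a * ξ) := by rw [pow_succ, ← mul_assoc, h2, neg_mul]
  rw [Finset.sum_range_succ, Finset.sum_range_succ, Finset.sum_range_succ, Finset.sum_range_one,
    pow_zero, mul_one, pow_one, h2, h3, map_neg, map_neg, haξ, ha, hTr, hTr, neg_neg, neg_neg]
  ring

open Complex in
theorem stmt_8 (p : ℕ) (hp : p.Prime) (hpodd : Odd p)
    (hprim : orderOf (p : ZMod 4) = Nat.totient 4)
    (F : Type*) [Field F] [Fintype F] [Algebra (ZMod p) F]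
    (hcard : Fintype.card F = p ^ 2)
    (ξ : F) (hξ : IsPrimitiveRoot ξ 4)
    (a : F) (a₁ a₂ : ZMod p)
    (ha : a = algebraMap (ZMod p) F a₁ * ξ + algebraMap (ZMod p) F a₂ * ξ ^ 2) :
    (∑ i ∈ Finset.range 4,
        Complex.exp (2 * Real.pi * I / p) ^ (Algebra.trace (ZMod p) F (a * ξ ^ i)).val) =
      Complex.exp (2 * Real.pi * I / p) ^ ((2 * a₁ : ZMod p)).val
        + Complex.exp (2 * Real.pi * I / p) ^ ((-(2 * a₁) : ZMod p)).val
        + Complex.exp (2 * Real.pi * I / p) ^ ((2 * a₂ : ZMod p)).val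
        + Complex.exp (2 * Real.pi * I / p) ^ ((-(2 * a₂) : ZMod p)).val :=
  stmt_8_general p hp hprim F hcard ξ hξ a a₁ a₂ ha
end

section
/- Let p be an odd prime, ℘ an odd prime with p a primitive root modulo ℘^m, q = p^{φ(℘^m)}, and χ the canonical additive character of 𝔽_q. For any a ∈ 𝔽_p, writing ξ for a primitive ℘^m-th root of unity in 𝔽_q, one has Σ_{i=0}^{℘^m−1} χ(a ξ^i) = (℘−1)·ζ_p^{−a℘^{m−1}} + ζ_p^{a(℘−1)℘^{m−1}} + ℘^m − ℘, where ζ_p = e^{2πi/p} and exponents of ζ_p are computed mod p. -/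
/-!
The Frobenius `x ↦ x ^ p` generates `Gal(F/𝔽_p)` and acts on `℘^m`-th roots of unity as the
power map by `p`, which generates `(ZMod ℘^m)ˣ`; so `Tr η = ∑_{u ∈ (ZMod ℘^m)ˣ} η ^ u` whenever
`η ^ ℘^m = 1`. Writing the units as all residues minus the multiples of `℘`, two geometric sums
give `Tr (ξ ^ i) = φ(℘^m)`, `-℘^(m-1)` or `0` according as `℘^m ∣ i`, `℘^(m-1) ∣ i`, or neither.
In the character sum, `i = 0` thus contributes `ζ^(a φ(℘^m))`, each of the `℘ - 1` other
multiples of `℘^(m-1)` contributes `ζ^(-a ℘^(m-1))`, and the remaining `℘^m - ℘` terms give `1`.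
-/

/-- The canonical additive character of a finite field `F` of characteristic `p`. -/
noncomputable def canChar (p : ℕ) (F : Type*) [Field F] [Fintype F] [Algebra (ZMod p) F]
    (x : F) : ℂ :=
  Complex.exp (2 * Real.pi * Complex.I / p) ^ (Algebra.trace (ZMod p) F x).val

open Finset

theorem Finset.filter_dvd_range_mul {k d : ℕ} (hd : 0 < d) :
    {i ∈ range (k * d) | d ∣ i} = (range k).image (· * d) := by
  ext i
  simp only [mem_filter, mem_range, mem_image]
  constructor
  · rintro ⟨hi, t, rfl⟩
    exact ⟨t, lt_of_mul_lt_mul_right (by rwa [mul_comm] at hi) hd.le, mul_comm t d⟩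
  · rintro ⟨t, ht, rfl⟩
    exact ⟨Nat.mul_lt_mul_of_pos_right ht hd, dvd_mul_left d t⟩

theorem Finset.sum_range_mul_ite_dvd {R : Type*} [CommRing R] {k d : ℕ} (hk : 0 < k) (hd : 0 < d)
    (A B C : R) :
    ∑ i ∈ range (k * d), (if i = 0 then A else if d ∣ i then B else C) =
      A + (k - 1) * B + (k * d - k) * C := by
  have hsplit : ∀ i, (if i = 0 then A else if d ∣ i then B else C) =
      ((if d ∣ i then B - C else 0) + (if i = 0 then A - B else 0)) + C := by
    intro i
    split_ifs <;> simp_all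
  have hcard : #{i ∈ range (k * d) | d ∣ i} = k := by
    rw [filter_dvd_range_mul hd, card_image_of_injective _ (mul_left_injective₀ hd.ne'),
      card_range]
  rw [sum_congr rfl fun i _ => hsplit i, sum_add_distrib, sum_add_distrib, ← sum_filter, sum_const,
    hcard, sum_ite_eq', if_pos (mem_range.mpr (Nat.mul_pos hk hd)), sum_const, card_range,
    nsmul_eq_mul, nsmul_eq_mul]
  push_cast
  ring

open Classical in
theorem geom_sum_eq_ite_of_pow_eq_one {R : Type*} [CommRing R] [IsDomain R] {x : R} {n : ℕ}
    (h : x ^ n = 1) : ∑ i ∈ range n, x ^ i = if x = 1 then (n : R) else 0 := by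
  split_ifs with hx
  · simp [hx]
  · have := mul_neg_geom_sum x n
    rw [h, sub_self] at this
    exact (mul_eq_zero.mp this).resolve_left (sub_ne_zero.mpr (Ne.symm hx))

theorem sum_range_orderOf_pow_eq_sum {G M : Type*} [Group G] [Fintype G] [AddCommMonoid M]
    {u : G} (hu : orderOf u = Fintype.card G) (f : G → M) :
    ∑ k ∈ range (orderOf u), f (u ^ k) = ∑ x, f x := by
  classical
  have hinj : Set.InjOn (u ^ ·) (range (orderOf u) : Set ℕ) := by
    simpa [coe_range] using pow_injOn_Iio_orderOf (x := u)
  rw [← eq_univ_of_card ((range (orderOf u)).image (u ^ ·))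
    (by rw [card_image_of_injOn hinj, card_range, hu]), sum_image hinj]

theorem ZMod.sum_units_val {M : Type*} [AddCommMonoid M] (n : ℕ) [NeZero n] (f : ℕ → M) :
    ∑ u : (ZMod n)ˣ, f (u : ZMod n).val = ∑ j ∈ range n with j.Coprime n, f j := by
  refine sum_nbij' (fun u => (u : ZMod n).val)
    (fun j => if h : j.Coprime n then ZMod.unitOfCoprime j h else 1)
    (fun u _ => ?_) (fun _ _ => mem_univ _) (fun u _ => ?_) (fun j hj => ?_) (fun _ _ => rfl)
  · simpa [mem_filter, mem_range] using ⟨ZMod.val_lt (u : ZMod n), ZMod.val_coe_unit_coprime u⟩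
  · rw [dif_pos (ZMod.val_coe_unit_coprime u)]
    ext
    simp
  · simp only [mem_filter, mem_range] at hj
    rw [dif_pos hj.2, ZMod.coe_unitOfCoprime, ZMod.val_natCast, Nat.mod_eq_of_lt hj.1]

theorem ZMod.sum_units_val_prime_pow {M : Type*} [AddCommGroup M] {℘ m : ℕ} (h℘ : ℘.Prime)
    (hm : m ≠ 0) [NeZero (℘ ^ m)] (f : ℕ → M) :
    ∑ u : (ZMod (℘ ^ m))ˣ, f (u : ZMod (℘ ^ m)).val =
      ∑ j ∈ range (℘ ^ m), f j - ∑ t ∈ range (℘ ^ (m - 1)), f (t * ℘) := by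
  have hcop : ∀ j, j.Coprime (℘ ^ m) ↔ ¬ ℘ ∣ j := fun j => by
    rw [Nat.coprime_pow_right_iff (Nat.pos_of_ne_zero hm), Nat.coprime_comm,
      h℘.coprime_iff_not_dvd]
  have hmultiples :
      ∑ j ∈ range (℘ ^ m) with ℘ ∣ j, f j = ∑ t ∈ range (℘ ^ (m - 1)), f (t * ℘) := by
    rw [← pow_sub_one_mul hm, filter_dvd_range_mul h℘.pos,
      sum_image fun s _ t _ h => Nat.eq_of_mul_eq_mul_right h℘.pos h]
  rw [ZMod.sum_units_val, filter_congr fun j _ => hcop j, ← hmultiples, eq_sub_iff_add_eq',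
    sum_filter_add_sum_filter_not]

open Classical in
theorem sum_units_pow_val_of_pow_eq_one {R : Type*} [CommRing R] [IsDomain R] {℘ m : ℕ}
    (h℘ : ℘.Prime) (hm : m ≠ 0) [NeZero (℘ ^ m)] {η : R} (hη : η ^ ℘ ^ m = 1) :
    ∑ u : (ZMod (℘ ^ m))ˣ, η ^ (u : ZMod (℘ ^ m)).val =
      if η = 1 then ((℘ ^ m).totient : R) else if η ^ ℘ = 1 then -(℘ ^ (m - 1) : R) else 0 := by
  have hη℘ : (η ^ ℘) ^ ℘ ^ (m - 1) = 1 := by rw [← pow_mul, mul_pow_sub_one hm, hη]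
  simp only [ZMod.sum_units_val_prime_pow h℘ hm (η ^ ·), pow_mul',
    geom_sum_eq_ite_of_pow_eq_one hη, geom_sum_eq_ite_of_pow_eq_one hη℘]
  split_ifs with h1 h2
  · rw [Nat.totient_prime_pow h℘ (Nat.pos_of_ne_zero hm), ← mul_pow_sub_one hm]
    push_cast [Nat.cast_sub h℘.one_le]
    ring
  · simp [h1] at h2
  all_goals simp

theorem FiniteField.algebraMap_trace_eq_sum_units (K L : Type*) [Field K] [Field L] [Finite L]
    [Algebra K L] {N : ℕ} [NeZero N] (hq : orderOf (Nat.card K : ZMod N) = N.totient)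
    (hdeg : Module.finrank K L = N.totient) {η : L} (hη : η ^ N = 1) :
    algebraMap K L (Algebra.trace K L η) = ∑ u : (ZMod N)ˣ, η ^ (u : ZMod N).val := by
  have hunit : IsUnit (Nat.card K : ZMod N) :=
    .of_pow_eq_one (pow_orderOf_eq_one _) (hq ▸ (Nat.totient_pos.mpr (NeZero.pos N)).ne')
  have hgen : orderOf hunit.unit = Fintype.card (ZMod N)ˣ := by
    rw [ZMod.card_units_eq_totient, ← hq, ← orderOf_units, hunit.unit_spec]
  rw [algebraMap_trace_eq_sum_pow, hdeg, ← ZMod.card_units_eq_totient, ← hgen,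
    ← sum_range_orderOf_pow_eq_sum hgen]
  refine sum_congr rfl fun k _ => ?_
  rw [Units.val_pow_eq_pow_val, hunit.unit_spec, ← Nat.cast_pow, ZMod.val_natCast,
    ← pow_eq_pow_mod _ hη]

theorem FiniteField.trace_pow_of_isPrimitiveRoot (K L : Type*) [Field K] [Field L] [Finite L]
    [Algebra K L] {℘ m : ℕ} (h℘ : ℘.Prime) (hm : m ≠ 0)
    (hq : orderOf (Nat.card K : ZMod (℘ ^ m)) = (℘ ^ m).totient)
    (hdeg : Module.finrank K L = (℘ ^ m).totient) {ξ : L} (hξ : IsPrimitiveRoot ξ (℘ ^ m))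
    (i : ℕ) :
    Algebra.trace K L (ξ ^ i) =
      if ℘ ^ m ∣ i then ((℘ ^ m).totient : K) else if ℘ ^ (m - 1) ∣ i then -(℘ ^ (m - 1) : K)
      else 0 := by
  have : NeZero (℘ ^ m) := ⟨pow_ne_zero m h℘.ne_zero⟩
  have hroot : (ξ ^ i) ^ ℘ ^ m = 1 := by rw [← pow_mul, mul_comm, pow_mul, hξ.pow_eq_one, one_pow]
  have hord℘ : (ξ ^ i) ^ ℘ = 1 ↔ ℘ ^ (m - 1) ∣ i := by
    rw [← pow_mul, hξ.pow_eq_one_iff_dvd, ← pow_sub_one_mul hm,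
      Nat.mul_dvd_mul_iff_right h℘.pos]
  apply (algebraMap K L).injective
  rw [algebraMap_trace_eq_sum_units K L hq hdeg hroot, sum_units_pow_val_of_pow_eq_one h℘ hm hroot]
  simp only [hξ.pow_eq_one_iff_dvd, hord℘]
  split_ifs <;> simp

theorem canChar_algebraMap_mul (p : ℕ) (F : Type*) [Field F] [Fintype F] [Algebra (ZMod p) F]
    (a : ZMod p) (x : F) :
    canChar p F (algebraMap (ZMod p) F a * x) =
      Complex.exp (2 * Real.pi * Complex.I / p) ^ (a * Algebra.trace (ZMod p) F x).val := by
  rw [canChar, ← Algebra.smul_def, map_smul, smul_eq_mul]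

theorem stmt_10_general (p ℘ m : ℕ) (hp : p.Prime) (h℘ : ℘.Prime)
    (hm : 1 ≤ m) (hprim : orderOf (p : ZMod (℘ ^ m)) = (℘ ^ m).totient)
    (F : Type*) [Field F] [Fintype F] [Algebra (ZMod p) F]
    (hcard : Fintype.card F = p ^ (℘ ^ m).totient)
    (ξ : F) (hξ : IsPrimitiveRoot ξ (℘ ^ m)) (a : ZMod p) :
    (∑ i ∈ Finset.range (℘ ^ m), canChar p F (algebraMap (ZMod p) F a * ξ ^ i)) =
      ((℘ : ℂ) - 1) * Complex.exp (2 * Real.pi * Complex.I / p)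
          ^ ((-(a * ((℘ ^ (m - 1) : ℕ) : ZMod p)) : ZMod p)).val
        + Complex.exp (2 * Real.pi * Complex.I / p)
          ^ ((a * (((℘ - 1) * ℘ ^ (m - 1) : ℕ) : ZMod p) : ZMod p)).val
        + (℘ : ℂ) ^ m - (℘ : ℂ) := by
  have : Fact p.Prime := ⟨hp⟩
  have hm0 : m ≠ 0 := Nat.one_le_iff_ne_zero.mp hm
  have hdeg : Module.finrank (ZMod p) F = (℘ ^ m).totient := by
    have hcard' := Module.card_eq_pow_finrank (K := ZMod p) (V := F)
    rw [ZMod.card, hcard] at hcard'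
    exact (Nat.pow_right_injective hp.two_le hcard').symm
  have htrace := FiniteField.trace_pow_of_isPrimitiveRoot (ZMod p) F h℘ hm0
    (by rwa [Nat.card_zmod]) hdeg hξ
  set ζ := Complex.exp (2 * Real.pi * Complex.I / p)
  calc _ = ∑ i ∈ range (℘ * ℘ ^ (m - 1)),
        (if i = 0 then ζ ^ (a * (((℘ - 1) * ℘ ^ (m - 1) : ℕ) : ZMod p)).val
          else if ℘ ^ (m - 1) ∣ i then ζ ^ (-(a * ((℘ ^ (m - 1) : ℕ) : ZMod p))).val else 1) := by
        rw [mul_pow_sub_one hm0]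
        refine sum_congr rfl fun i hi => ?_
        have hdvd : ℘ ^ m ∣ i ↔ i = 0 :=
          ⟨fun h => Nat.eq_zero_of_dvd_of_lt h (mem_range.mp hi), fun h => h ▸ dvd_zero _⟩
        rw [canChar_algebraMap_mul, htrace, Nat.totient_prime_pow h℘ (Nat.pos_of_ne_zero hm0),
          mul_comm (℘ ^ (m - 1))]
        simp only [hdvd]
        split_ifs <;> simp [ζ]
    _ = _ := by
        rw [sum_range_mul_ite_dvd h℘.pos (pow_pos h℘.pos _)]
        push_cast
        rw [mul_pow_sub_one hm0]
        ring

theorem stmt_10 (p ℘ m : ℕ) (hp : p.Prime) (hpodd : Odd p) (h℘ : ℘.Prime) (h℘odd : Odd ℘)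
    (hm : 1 ≤ m) (hprim : orderOf (p : ZMod (℘ ^ m)) = (℘ ^ m).totient)
    (F : Type*) [Field F] [Fintype F] [Algebra (ZMod p) F]
    (hcard : Fintype.card F = p ^ (℘ ^ m).totient)
    (ξ : F) (hξ : IsPrimitiveRoot ξ (℘ ^ m)) (a : ZMod p) :
    (∑ i ∈ Finset.range (℘ ^ m), canChar p F (algebraMap (ZMod p) F a * ξ ^ i)) =
      ((℘ : ℂ) - 1) * Complex.exp (2 * Real.pi * Complex.I / p)
          ^ ((-(a * ((℘ ^ (m - 1) : ℕ) : ZMod p)) : ZMod p)).val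
        + Complex.exp (2 * Real.pi * Complex.I / p)
          ^ ((a * (((℘ - 1) * ℘ ^ (m - 1) : ℕ) : ZMod p) : ZMod p)).val
        + (℘ : ℂ) ^ m - (℘ : ℂ) :=
  stmt_10_general p ℘ m hp h℘ hm hprim F hcard ξ hξ a
end

section
/- Let ℘ be an odd prime such that 3 is a primitive root modulo ℘^m, q = 3^{φ(℘^m)}, and Tr the trace from 𝔽_q to 𝔽_3. Then the cardinality of D = {x ∈ 𝔽_q^* : Tr(x^{(q−1)/℘^m}) = 0} equals ((q−1)/℘^m)·(℘^m − ℘ + 1) if ℘ ≡ 1 (mod 3), and equals ((q−1)/℘^m)·(℘^m − ℘) if ℘ ≡ −1 (mod 3). -/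
/-!
Raising to the power `d = (q - 1) / ℘ ^ m` maps `𝔽_q^*` onto the `℘ ^ m`-th roots of unity with
fibres of size `d`: each fibre has at most `d` points and together they cover `𝔽_q^*`. Hence
`|D| = d · #{y | y ^ ℘ ^ m = 1, Tr y = 0}`. As `3` generates `(ℤ/℘ ^ m)^*`, for such `y` the sum
`Tr y = ∑_{i < φ(℘ ^ m)} y ^ 3 ^ i` runs over the `y ^ k` with `k` prime to `℘`, so two geometric
sums give `Tr y = [y = 1] ℘ ^ m - [y ^ ℘ = 1] ℘ ^ (m - 1)` in characteristic `3`. This vanishes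
off the `℘`-th roots of unity, equals `-℘ ^ (m - 1) ≠ 0` at the nontrivial ones, and at `y = 1`
equals `℘ ^ (m - 1) (℘ - 1)`, which vanishes iff `℘ ≡ 1 mod 3`.
-/

open Finset Polynomial

theorem Polynomial.card_nthRootsFinset_le {R : Type*} [CommRing R] [IsDomain R] (n : ℕ) (a : R) :
    #(nthRootsFinset n a) ≤ n := by
  classical
  rw [nthRootsFinset_def]
  exact (Multiset.toFinset_card_le _).trans (card_nthRoots n a)

namespace FiniteField

variable {K : Type*} [Field K] [Fintype K]

theorem sum_card_nthRootsFinset_of_mul_eq {d n : ℕ} (hdn : d * n = Fintype.card K - 1) :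
    ∑ y ∈ nthRootsFinset n (1 : K), #(nthRootsFinset d y) = Fintype.card K - 1 := by
  classical
  have hpos : 0 < d * n := hdn ▸ Nat.sub_pos_of_lt Fintype.one_lt_card
  have hd : 0 < d := Nat.pos_of_mul_pos_right hpos
  have hn : 0 < n := Nat.pos_of_mul_pos_left hpos
  have hmaps : ∀ x ∈ univ.erase (0 : K), x ^ d ∈ nthRootsFinset n (1 : K) := fun x hx => by
    rw [mem_nthRootsFinset hn, ← pow_mul, hdn]
    exact pow_card_sub_one_eq_one x (ne_of_mem_erase hx)
  rw [← card_univ, ← card_erase_of_mem (mem_univ 0), card_eq_sum_card_fiberwise hmaps]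
  refine sum_congr rfl fun y hy => ?_
  have hy0 : y ≠ 0 := ne_zero_of_mem_nthRootsFinset one_ne_zero hy
  congr 1
  ext x
  simp only [mem_filter, mem_erase, mem_univ, mem_nthRootsFinset hd]
  exact ⟨fun h => ⟨⟨fun hx => hy0 (by simp [← h, hx, hd.ne']), trivial⟩, h⟩, fun h => h.2⟩

theorem card_nthRootsFinset_one_of_dvd {n : ℕ} (hn : n ∣ Fintype.card K - 1) :
    #(nthRootsFinset n (1 : K)) = n := by
  set d := (Fintype.card K - 1) / n
  have hdn : d * n = Fintype.card K - 1 := Nat.div_mul_cancel hn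
  have hd : 0 < d := Nat.pos_of_mul_pos_right (hdn ▸ Nat.sub_pos_of_lt Fintype.one_lt_card)
  have hle : d * n ≤ d * #(nthRootsFinset n (1 : K)) :=
    calc d * n = ∑ y ∈ nthRootsFinset n (1 : K), #(nthRootsFinset d y) :=
          hdn.trans (sum_card_nthRootsFinset_of_mul_eq hdn).symm
      _ ≤ #(nthRootsFinset n (1 : K)) * d :=
          sum_le_card_nsmul _ _ _ fun y _ => card_nthRootsFinset_le d y
      _ = d * #(nthRootsFinset n (1 : K)) := mul_comm _ _
  exact le_antisymm (card_nthRootsFinset_le n 1) (Nat.le_of_mul_le_mul_left hle hd)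

theorem card_nthRootsFinset_of_mul_eq {d n : ℕ} (hdn : d * n = Fintype.card K - 1) {y : K}
    (hy : y ∈ nthRootsFinset n (1 : K)) : #(nthRootsFinset d y) = d := by
  have hsum : ∑ y ∈ nthRootsFinset n (1 : K), #(nthRootsFinset d y) =
      ∑ _y ∈ nthRootsFinset n (1 : K), d := by
    rw [sum_card_nthRootsFinset_of_mul_eq hdn, sum_const,
      card_nthRootsFinset_one_of_dvd (Dvd.intro_left d hdn), smul_eq_mul, mul_comm, hdn]
  exact (sum_eq_sum_iff_of_le fun y _ => card_nthRootsFinset_le d y).mp hsum y hy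

theorem card_filter_pow_eq_mul [DecidableEq K] {d n : ℕ} (hdn : d * n = Fintype.card K - 1)
    (P : K → Prop) [DecidablePred P] :
    #{x | x ≠ 0 ∧ P (x ^ d)} = d * #{y ∈ nthRootsFinset n (1 : K) | P y} := by
  have hpos : 0 < d * n := hdn ▸ Nat.sub_pos_of_lt Fintype.one_lt_card
  have hd : 0 < d := Nat.pos_of_mul_pos_right hpos
  have hn : 0 < n := Nat.pos_of_mul_pos_left hpos
  have hmaps : ∀ x ∈ ({x | x ≠ 0 ∧ P (x ^ d)} : Finset K),
      x ^ d ∈ {y ∈ nthRootsFinset n (1 : K) | P y} := fun x hx => by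
    rw [mem_filter] at hx ⊢
    refine ⟨?_, hx.2.2⟩
    rw [mem_nthRootsFinset hn, ← pow_mul, hdn]
    exact pow_card_sub_one_eq_one x hx.2.1
  rw [card_eq_sum_card_fiberwise hmaps, mul_comm, ← smul_eq_mul, ← sum_const]
  refine sum_congr rfl fun y hy => ?_
  rw [mem_filter] at hy
  have hy0 : y ≠ 0 := ne_zero_of_mem_nthRootsFinset one_ne_zero hy.1
  refine (congrArg Finset.card ?_).trans (card_nthRootsFinset_of_mul_eq hdn hy.1)
  ext x
  simp only [mem_filter, mem_univ, true_and, mem_nthRootsFinset hd]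
  refine ⟨fun h => h.2, fun h => ⟨⟨?_, h ▸ hy.2⟩, h⟩⟩
  rintro rfl
  exact hy0 (by simp [← h, hd.ne'])

theorem card_filter_nthRootsFinset_pow_eq_one_imp [DecidableEq K] {p n : ℕ} (hp : 0 < p)
    (hpn : p ∣ n) (hn : n ∣ Fintype.card K - 1) (c : Prop) [Decidable c] :
    #{y ∈ nthRootsFinset n (1 : K) | y ^ p = 1 → y = 1 ∧ c} = n - p + if c then 1 else 0 := by
  have hn0 : 0 < n := Nat.pos_of_dvd_of_pos hn (Nat.sub_pos_of_lt Fintype.one_lt_card)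
  have hsub : nthRootsFinset p (1 : K) ⊆ nthRootsFinset n 1 := fun y hy => by
    obtain ⟨k, rfl⟩ := hpn
    rw [mem_nthRootsFinset hp] at hy
    rw [mem_nthRootsFinset hn0, pow_mul, hy, one_pow]
  have hcard : #(nthRootsFinset n (1 : K) \ nthRootsFinset p 1) = n - p := by
    rw [card_sdiff_of_subset hsub, card_nthRootsFinset_one_of_dvd hn,
      card_nthRootsFinset_one_of_dvd (hpn.trans hn)]
  by_cases hc : c
  · have h1 : (1 : K) ∉ nthRootsFinset n 1 \ nthRootsFinset p 1 := by
      simp [mem_sdiff, hp]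
    have : {y ∈ nthRootsFinset n (1 : K) | y ^ p = 1 → y = 1 ∧ c} =
        insert 1 (nthRootsFinset n 1 \ nthRootsFinset p 1) := by
      ext y
      simp only [mem_filter, mem_insert, mem_sdiff, hc, and_true]
      constructor
      · rintro ⟨hy, hyp⟩
        by_cases h : y ^ p = 1
        · exact .inl (hyp h)
        · exact .inr ⟨hy, by rwa [mem_nthRootsFinset hp]⟩
      · rintro (rfl | ⟨hy, hyp⟩)
        · exact ⟨one_mem_nthRootsFinset hn0, fun _ => rfl⟩
        · exact ⟨hy, fun h => absurd ((mem_nthRootsFinset hp _).mpr h) hyp⟩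
    rw [this, card_insert_of_notMem h1, hcard, if_pos hc]
  · have : {y ∈ nthRootsFinset n (1 : K) | y ^ p = 1 → y = 1 ∧ c} =
        nthRootsFinset n 1 \ nthRootsFinset p 1 := by
      ext y
      simp [mem_nthRootsFinset hp, hc]
    rw [this, hcard, if_neg hc, add_zero]

end FiniteField

theorem Nat.coprime_of_orderOf_natCast_eq_totient {n a : ℕ} (hn : n ≠ 0)
    (ha : orderOf (a : ZMod n) = n.totient) : a.Coprime n := by
  have : IsOfFinOrder (a : ZMod n) := by
    rw [← orderOf_pos_iff, ha]
    exact Nat.totient_pos.mpr (Nat.pos_of_ne_zero hn)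
  exact (ZMod.isUnit_iff_coprime a n).mp this.isUnit

theorem sum_pow_pow_range_totient_eq_sum_coprime {R : Type*} [Semiring R] {n a : ℕ}
    (ha : orderOf (a : ZMod n) = n.totient) {y : R} (hy : y ^ n = 1) :
    ∑ i ∈ range n.totient, y ^ a ^ i = ∑ k ∈ range n with n.Coprime k, y ^ k := by
  rcases Nat.eq_zero_or_pos n with rfl | hn
  · simp
  have hinj : Set.InjOn (fun i => a ^ i % n) (range n.totient) := fun i hi j hj hij => by
    have : (a : ZMod n) ^ i = (a : ZMod n) ^ j := by
      simpa only [Nat.cast_pow] using (ZMod.natCast_eq_natCast_iff' _ _ _).mpr hij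
    exact pow_injOn_Iio_orderOf (by simpa [ha] using hi) (by simpa [ha] using hj) this
  have himage : (range n.totient).image (fun i => a ^ i % n) = {k ∈ range n | n.Coprime k} := by
    refine eq_of_subset_of_card_le (fun k hk => ?_) ?_
    · obtain ⟨i, -, rfl⟩ := mem_image.mp hk
      have hcop := ((Nat.coprime_of_orderOf_natCast_eq_totient hn.ne' ha).pow_left i).symm
      rw [Nat.Coprime, Nat.gcd_rec] at hcop
      exact mem_filter.mpr ⟨mem_range.mpr (Nat.mod_lt _ hn), Nat.coprime_comm.mp hcop⟩
    · rw [card_image_of_injOn hinj, card_range, Nat.totient_eq_card_coprime]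
  rw [← himage, sum_image hinj]
  exact sum_congr rfl fun i _ => pow_eq_pow_mod _ hy

theorem Finset.sum_filter_dvd_range_mul {M : Type*} [AddCommMonoid M] {p : ℕ} (hp : 0 < p)
    (N : ℕ) (f : ℕ → M) : ∑ k ∈ range (p * N) with p ∣ k, f k = ∑ j ∈ range N, f (p * j) := by
  have : {k ∈ range (p * N) | p ∣ k} = (range N).image (p * ·) := by
    ext k
    simp only [mem_filter, mem_range, mem_image]
    constructor
    · rintro ⟨hk, j, rfl⟩
      exact ⟨j, Nat.lt_of_mul_lt_mul_left hk, rfl⟩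
    · rintro ⟨j, hj, rfl⟩
      exact ⟨Nat.mul_lt_mul_of_pos_left hj hp, dvd_mul_right p j⟩
  rw [this, sum_image fun i _ j _ h => Nat.eq_of_mul_eq_mul_left hp h]

theorem Finset.sum_range_prime_pow_filter_coprime {R : Type*} [AddCommGroup R] {p : ℕ}
    (hp : p.Prime) (m : ℕ) (f : ℕ → R) :
    ∑ k ∈ range (p ^ (m + 1)) with (p ^ (m + 1)).Coprime k, f k =
      ∑ k ∈ range (p ^ (m + 1)), f k - ∑ j ∈ range (p ^ m), f (p * j) := by
  have hcop : ∀ k, (p ^ (m + 1)).Coprime k ↔ ¬ p ∣ k := fun k => by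
    rw [Nat.coprime_pow_left_iff m.succ_pos, hp.coprime_iff_not_dvd]
  simp_rw [hcop]
  rw [eq_sub_iff_add_eq, pow_succ', ← sum_filter_dvd_range_mul hp.pos, add_comm,
    sum_filter_add_sum_filter_not]

theorem geom_sum_eq_ite_of_pow_eq_one_s15 {K : Type*} [Field K] [DecidableEq K] {y : K} {N : ℕ}
    (hy : y ^ N = 1) : ∑ k ∈ range N, y ^ k = if y = 1 then (N : K) else 0 := by
  split_ifs with h
  · simp [h]
  · rw [geom_sum_eq h, hy, sub_self, zero_div]

theorem sum_pow_pow_range_totient_prime_pow {K : Type*} [Field K] [DecidableEq K] {p m a : ℕ}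
    (hp : p.Prime) (ha : orderOf (a : ZMod (p ^ (m + 1))) = (p ^ (m + 1)).totient) {y : K}
    (hy : y ^ p ^ (m + 1) = 1) :
    ∑ i ∈ range (p ^ (m + 1)).totient, y ^ a ^ i =
      (if y = 1 then ((p ^ (m + 1) : ℕ) : K) else 0) -
        if y ^ p = 1 then ((p ^ m : ℕ) : K) else 0 := by
  have hyp : (y ^ p) ^ p ^ m = 1 := by rwa [← pow_mul, ← pow_succ']
  rw [sum_pow_pow_range_totient_eq_sum_coprime ha hy, sum_range_prime_pow_filter_coprime hp,
    geom_sum_eq_ite_of_pow_eq_one_s15 hy]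
  simp_rw [pow_mul]
  rw [geom_sum_eq_ite_of_pow_eq_one_s15 hyp]

theorem Module.finrank_zmod_eq_of_card_eq_pow {ℓ f : ℕ} [Fact ℓ.Prime] {F : Type*} [Field F]
    [Fintype F] [Algebra (ZMod ℓ) F] (hcard : Fintype.card F = ℓ ^ f) :
    Module.finrank (ZMod ℓ) F = f := by
  have := Module.card_eq_pow_finrank (K := ZMod ℓ) (V := F)
  rw [hcard, ZMod.card] at this
  exact Nat.pow_right_injective (Fact.out : ℓ.Prime).two_le this.symm

section CyclotomicTrace

variable {ℓ p m : ℕ} [Fact ℓ.Prime] {F : Type*} [Field F] [Fintype F] [Algebra (ZMod ℓ) F]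

theorem algebraMap_trace_eq_of_pow_prime_pow_eq_one [DecidableEq F] (hp : p.Prime)
    (hprim : orderOf (ℓ : ZMod (p ^ (m + 1))) = (p ^ (m + 1)).totient)
    (hcard : Fintype.card F = ℓ ^ (p ^ (m + 1)).totient) {y : F} (hy : y ^ p ^ (m + 1) = 1) :
    algebraMap (ZMod ℓ) F (Algebra.trace (ZMod ℓ) F y) =
      (if y = 1 then ((p ^ (m + 1) : ℕ) : F) else 0) -
        if y ^ p = 1 then ((p ^ m : ℕ) : F) else 0 := by
  rw [FiniteField.algebraMap_trace_eq_sum_pow, Module.finrank_zmod_eq_of_card_eq_pow hcard,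
    Nat.card_zmod, sum_pow_pow_range_totient_prime_pow hp hprim hy]

theorem trace_eq_zero_iff_of_pow_prime_pow_eq_one (hp : p.Prime)
    (hprim : orderOf (ℓ : ZMod (p ^ (m + 1))) = (p ^ (m + 1)).totient)
    (hcard : Fintype.card F = ℓ ^ (p ^ (m + 1)).totient) {y : F} (hy : y ^ p ^ (m + 1) = 1) :
    Algebra.trace (ZMod ℓ) F y = 0 ↔ (y ^ p = 1 → y = 1 ∧ ℓ ∣ p - 1) := by
  classical
  have hℓ : ℓ.Prime := Fact.out
  have : CharP F ℓ := (Algebra.charP_iff (ZMod ℓ) F ℓ).mp (ZMod.charP ℓ)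
  have hℓp : ¬ ℓ ∣ p := (Nat.Prime.coprime_iff_not_dvd hℓ).mp
    ((Nat.coprime_of_orderOf_natCast_eq_totient (pow_ne_zero _ hp.ne_zero) hprim).coprime_dvd_right
      (dvd_pow_self p m.succ_ne_zero))
  have hpm : ((p ^ m : ℕ) : F) ≠ 0 := by
    rw [Ne, CharP.cast_eq_zero_iff F ℓ]
    exact fun h => hℓp (hℓ.dvd_of_dvd_pow h)
  rw [← map_eq_zero_iff _ (algebraMap (ZMod ℓ) F).injective,
    algebraMap_trace_eq_of_pow_prime_pow_eq_one hp hprim hcard hy]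
  by_cases hyp : y ^ p = 1
  · by_cases hy1 : y = 1
    · have hsub : p ^ (m + 1) - p ^ m = p ^ m * (p - 1) := by
        rw [pow_succ, Nat.mul_sub_one]
      rw [if_pos hy1, if_pos hyp, ← Nat.cast_sub (Nat.pow_le_pow_right hp.pos m.le_succ),
        CharP.cast_eq_zero_iff F ℓ, hsub, hℓ.dvd_mul]
      simp [hy1, hℓ.dvd_of_dvd_pow.mt hℓp]
    · rw [if_neg hy1, if_pos hyp, zero_sub, neg_eq_zero]
      exact iff_of_false hpm fun h => hy1 (h hyp).1
  · have hy1 : y ≠ 1 := fun h => hyp (by rw [h, one_pow])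
    simp [hy1, hyp]

end CyclotomicTrace

theorem stmt_15_general (℘ m : ℕ) (h℘ : ℘.Prime) (hm : 1 ≤ m)
    (hprim : orderOf (3 : ZMod (℘ ^ m)) = (℘ ^ m).totient)
    (F : Type*) [Field F] [Fintype F] [DecidableEq F] [Algebra (ZMod 3) F]
    (hcard : Fintype.card F = 3 ^ (℘ ^ m).totient) :
    (℘ % 3 = 1 →
      (Finset.univ.filter (fun x : F => x ≠ 0 ∧
          Algebra.trace (ZMod 3) F (x ^ ((Fintype.card F - 1) / ℘ ^ m)) = 0)).card =
        ((Fintype.card F - 1) / ℘ ^ m) * (℘ ^ m - ℘ + 1)) ∧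
    (℘ % 3 = 2 →
      (Finset.univ.filter (fun x : F => x ≠ 0 ∧
          Algebra.trace (ZMod 3) F (x ^ ((Fintype.card F - 1) / ℘ ^ m)) = 0)).card =
        ((Fintype.card F - 1) / ℘ ^ m) * (℘ ^ m - ℘)) := by
  obtain ⟨m, rfl⟩ : ∃ k, m = k + 1 := ⟨m - 1, by omega⟩
  have hprim' : orderOf ((3 : ℕ) : ZMod (℘ ^ (m + 1))) = (℘ ^ (m + 1)).totient := by
    exact_mod_cast hprim
  have hdvd : ℘ ^ (m + 1) ∣ Fintype.card F - 1 := by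
    rw [hcard]
    exact (Nat.modEq_iff_dvd' (Nat.one_le_pow _ _ three_pos)).mp (Nat.ModEq.pow_totient
      (Nat.coprime_of_orderOf_natCast_eq_totient (pow_ne_zero _ h℘.ne_zero) hprim')).symm
  have htrace : {y ∈ nthRootsFinset (℘ ^ (m + 1)) (1 : F) | Algebra.trace (ZMod 3) F y = 0} =
      {y ∈ nthRootsFinset (℘ ^ (m + 1)) (1 : F) | y ^ ℘ = 1 → y = 1 ∧ 3 ∣ ℘ - 1} :=
    filter_congr fun y hy => trace_eq_zero_iff_of_pow_prime_pow_eq_one h℘ hprim' hcard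
      ((mem_nthRootsFinset (pow_pos h℘.pos _) 1).mp hy)
  rw [FiniteField.card_filter_pow_eq_mul (Nat.div_mul_cancel hdvd)
      (fun y => Algebra.trace (ZMod 3) F y = 0), htrace,
    FiniteField.card_filter_nthRootsFinset_pow_eq_one_imp h℘.pos
      (dvd_pow_self ℘ (Nat.add_one_ne_zero m)) hdvd]
  refine ⟨fun h => ?_, fun h => ?_⟩
  · rw [if_pos (by omega)]
  · rw [if_neg (by omega), add_zero]

theorem stmt_15 (℘ m : ℕ) (h℘ : ℘.Prime) (h℘odd : Odd ℘) (hm : 1 ≤ m)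
    (hprim : orderOf (3 : ZMod (℘ ^ m)) = (℘ ^ m).totient)
    (F : Type*) [Field F] [Fintype F] [DecidableEq F] [Algebra (ZMod 3) F]
    (hcard : Fintype.card F = 3 ^ (℘ ^ m).totient) :
    (℘ % 3 = 1 →
      (Finset.univ.filter (fun x : F => x ≠ 0 ∧
          Algebra.trace (ZMod 3) F (x ^ ((Fintype.card F - 1) / ℘ ^ m)) = 0)).card =
        ((Fintype.card F - 1) / ℘ ^ m) * (℘ ^ m - ℘ + 1)) ∧
    (℘ % 3 = 2 →
      (Finset.univ.filter (fun x : F => x ≠ 0 ∧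
          Algebra.trace (ZMod 3) F (x ^ ((Fintype.card F - 1) / ℘ ^ m)) = 0)).card =
        ((Fintype.card F - 1) / ℘ ^ m) * (℘ ^ m - ℘)) :=
  stmt_15_general ℘ m h℘ hm hprim F hcard
end

section
/- Let ℘ be an odd prime with 3 a primitive root modulo ℘^m where m ≥ 2, q = 3^{φ(℘^m)}, D = {x ∈ 𝔽_q^* : Tr(x^{(q−1)/℘^m}) = 0}, and 𝒞_D the associated ternary code with defining set D. Then the minimum distance of the dual code 𝒞_D^⊥ equals 2. -/
/-!
Let `ζ = g ^ ((q - 1) / ℘ ^ m)` for a generator `g` of `𝔽_q^*`, so `ζ` has order `℘ ^ m`. Since `3`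
generates `(ℤ/℘^m)^*`, every `ζ ^ a` with `a` prime to `℘` is a Frobenius conjugate of `ζ`, hence
has the same trace; taking `a = 1 + k ℘^(m-1)` and summing over `k < ℘` gives
`℘ · Tr ζ = Tr (ζ · ∑ ω ^ k) = 0` with `ω = ζ ^ ℘^(m-1)` a primitive `℘`-th root of unity. So `g`
and `-g` (the exponent is even) both lie in `D`, and `e_g + e_{-g}` is a dual codeword of weight
`2`. A dual codeword of weight `1` would force `Tr (d x) = 0` for all `x`, contradicting the
surjectivity of the trace.
-/

open Finset

theorem FiniteField.trace_pow_card_pow {K L : Type*} [Field K] [Fintype K] [Field L] [Algebra K L]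
    [Algebra.IsAlgebraic K L] (x : L) (n : ℕ) :
    Algebra.trace K L (x ^ Fintype.card K ^ n) = Algebra.trace K L x := by
  rw [← Algebra.trace_eq_of_algEquiv (FiniteField.frobeniusAlgEquivOfAlgebraic K L ^ n) x,
    AlgEquiv.coe_pow, FiniteField.coe_frobeniusAlgEquivOfAlgebraic_iterate]

theorem ZMod.exists_pow_eq_of_orderOf_eq_totient {n : ℕ} [NeZero n] {a : ZMod n}
    (ha : orderOf a = n.totient) (u : (ZMod n)ˣ) : ∃ i, a ^ i = u := by
  have hfin : IsOfFinOrder a :=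
    orderOf_pos_iff.mp (ha ▸ Nat.totient_pos.mpr (Nat.pos_of_neZero n))
  set U := hfin.isUnit.unit
  have hU : Subgroup.zpowers U = ⊤ := by
    rw [← Subgroup.card_eq_iff_eq_top, Nat.card_zpowers, ← orderOf_units, IsUnit.unit_spec, ha,
      Nat.card_eq_fintype_card, ZMod.card_units_eq_totient]
  obtain ⟨i, hi⟩ := mem_powers_iff_mem_zpowers.mpr (hU ▸ Subgroup.mem_top u)
  exact ⟨i, by rw [← hi, Units.val_pow_eq_pow_val, IsUnit.unit_spec]⟩

theorem Nat.Prime.ne_of_orderOf_natCast_eq_totient {℘ m p : ℕ} (h℘ : ℘.Prime) (hm : m ≠ 0)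
    (hp : orderOf (p : ZMod (℘ ^ m)) = (℘ ^ m).totient) : ℘ ≠ p := by
  rintro rfl
  have : NeZero (℘ ^ m) := ⟨pow_ne_zero _ h℘.ne_zero⟩
  have hunit : IsUnit (℘ : ZMod (℘ ^ m)) :=
    (orderOf_pos_iff.mp (hp ▸ Nat.totient_pos.mpr (Nat.pos_of_neZero _))).isUnit
  rw [ZMod.isUnit_iff_coprime, Nat.coprime_pow_right_iff (Nat.pos_of_ne_zero hm),
    Nat.coprime_self] at hunit
  exact h℘.one_lt.ne' hunit

section RootsOfUnity

variable {p : ℕ} [Fact p.Prime] {F : Type*} [Field F] [Fintype F] [Algebra (ZMod p) F]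

theorem trace_pow_eq_trace_of_isUnit {N : ℕ} [NeZero N]
    (hp : orderOf (p : ZMod N) = N.totient) {ζ : F} (hζ : orderOf ζ = N) {a : ℕ}
    (ha : IsUnit (a : ZMod N)) :
    Algebra.trace (ZMod p) F (ζ ^ a) = Algebra.trace (ZMod p) F ζ := by
  obtain ⟨i, hi⟩ := ZMod.exists_pow_eq_of_orderOf_eq_totient hp ha.unit
  have hpow : ζ ^ p ^ i = ζ ^ a := by
    refine pow_eq_pow_of_modEq ?_ (hζ ▸ pow_orderOf_eq_one ζ)
    rw [← ZMod.natCast_eq_natCast_iff, Nat.cast_pow, hi, IsUnit.unit_spec]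
  rw [← hpow]
  simpa only [ZMod.card] using FiniteField.trace_pow_card_pow (K := ZMod p) ζ i

theorem trace_eq_zero_of_orderOf_eq_prime_pow {℘ m : ℕ} (h℘ : ℘.Prime) (hm : 2 ≤ m)
    (hp : orderOf (p : ZMod (℘ ^ m)) = (℘ ^ m).totient) {ζ : F} (hζ : orderOf ζ = ℘ ^ m) :
    Algebra.trace (ZMod p) F ζ = 0 := by
  have : NeZero (℘ ^ m) := ⟨pow_ne_zero _ h℘.ne_zero⟩
  have hm' : ℘ ^ m = ℘ ^ (m - 1) * ℘ := by rw [← pow_succ]; congr 1; omega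
  set ω := ζ ^ ℘ ^ (m - 1)
  have hω : IsPrimitiveRoot ω ℘ := (hζ ▸ IsPrimitiveRoot.orderOf ζ).pow (Nat.pos_of_neZero _) hm'
  -- `1 + ℘ ^ (m - 1) * k` is a unit mod `℘ ^ m`, so `ζ * ω ^ k` is a Galois conjugate of `ζ`.
  have hconj : ∀ k, Algebra.trace (ZMod p) F (ζ * ω ^ k) = Algebra.trace (ZMod p) F ζ := by
    intro k
    have hunit : IsUnit (((1 + ℘ ^ (m - 1) * k : ℕ)) : ZMod (℘ ^ m)) := by
      push_cast
      refine IsNilpotent.isUnit_one_add ⟨2, ?_⟩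
      have h2 : 2 * (m - 1) = m + (m - 2) := by omega
      rw [mul_pow, ← pow_mul, mul_comm (m - 1), h2, pow_add, ← Nat.cast_pow, ZMod.natCast_self,
        zero_mul, zero_mul]
    rw [← trace_pow_eq_trace_of_isUnit hp hζ hunit, pow_add, pow_one, pow_mul]
  have hsum : ∑ k ∈ range ℘, ω ^ k = 0 := hω.geom_sum_eq_zero h℘.one_lt
  have h℘0 : (℘ : ZMod p) ≠ 0 := by
    rw [Ne, ZMod.natCast_eq_zero_iff, Nat.prime_dvd_prime_iff_eq Fact.out h℘]
    exact (h℘.ne_of_orderOf_natCast_eq_totient (by omega) hp).symm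
  have : (℘ : ZMod p) * Algebra.trace (ZMod p) F ζ = 0 := by
    calc (℘ : ZMod p) * Algebra.trace (ZMod p) F ζ
        = ∑ k ∈ range ℘, Algebra.trace (ZMod p) F (ζ * ω ^ k) := by
          simp only [hconj, sum_const, card_range, nsmul_eq_mul]
      _ = Algebra.trace (ZMod p) F (ζ * ∑ k ∈ range ℘, ω ^ k) := by rw [mul_sum, map_sum]
      _ = 0 := by rw [hsum, mul_zero, map_zero]
  exact (mul_eq_zero.mp this).resolve_left h℘0

end RootsOfUnity

theorem FiniteField.exists_orderOf_pow_card_sub_one_div_eq {F : Type*} [Field F] [Fintype F]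
    {n : ℕ} (hn : n ∣ Fintype.card F - 1) :
    ∃ g : Fˣ, orderOf ((g : F) ^ ((Fintype.card F - 1) / n)) = n := by
  classical
  obtain ⟨g, hg⟩ := IsCyclic.exists_generator (α := Fˣ)
  have hord : orderOf g = Fintype.card F - 1 := by
    rw [orderOf_eq_card_of_forall_mem_zpowers hg, Nat.card_eq_fintype_card, Fintype.card_units]
  refine ⟨g, ?_⟩
  rw [← Units.val_pow_eq_pow_val, orderOf_units, ← hord,
    orderOf_pow_orderOf_div (orderOf_pos g).ne' (hord ▸ hn)]

section TraceCode

variable {K L ι : Type*} [Field K] [DecidableEq K] [Field L] [Algebra K L] [Fintype ι]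
  (c : ι → L)

theorem exists_dual_codeword_card_support_eq_two {i j : ι} (hij : i ≠ j) (hc : c j = -c i) :
    ∃ v : ι → K, (∀ x, ∑ k, v k * Algebra.trace K L (c k * x) = 0) ∧ v ≠ 0 ∧
      #{k | v k ≠ 0} = 2 := by
  classical
  refine ⟨Pi.single i 1 + Pi.single j 1, fun x => ?_, fun h => ?_, ?_⟩
  · simp [add_mul, sum_add_distrib, Pi.single_apply, hc]
  · simpa [hij.symm] using congrFun h i
  · convert card_pair hij
    ext k
    by_cases hki : k = i <;> by_cases hkj : k = j <;> simp_all [Pi.single_apply]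

theorem two_le_card_support_of_dual_codeword [FiniteDimensional K L] [Algebra.IsSeparable K L]
    (hc : ∀ i, c i ≠ 0) {v : ι → K} (hv : ∀ x, ∑ k, v k * Algebra.trace K L (c k * x) = 0)
    (hv0 : v ≠ 0) : 2 ≤ #{k | v k ≠ 0} := by
  by_contra! hlt
  obtain ⟨i, hi⟩ : ∃ i, v i ≠ 0 := Function.ne_iff.mp hv0
  have hothers : ∀ k, k ≠ i → v k = 0 := fun k hk => by
    by_contra hvk
    exact hk (card_le_one.mp (Nat.le_of_lt_succ hlt) k (by simpa using hvk) i (by simpa using hi))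
  obtain ⟨z, hz⟩ := Algebra.trace_surjective K L 1
  have := hv ((c i)⁻¹ * z)
  rw [sum_eq_single i (fun k _ hk => by rw [hothers k hk, zero_mul]) (by simp),
    mul_inv_cancel_left₀ (hc i), hz, mul_one] at this
  exact hi this

end TraceCode

theorem stmt_17 (℘ m : ℕ) (h℘ : ℘.Prime) (h℘odd : Odd ℘) (hm : 2 ≤ m)
    (hprim : orderOf (3 : ZMod (℘ ^ m)) = (℘ ^ m).totient)
    (F : Type*) [Field F] [Fintype F] [DecidableEq F] [Algebra (ZMod 3) F]
    (hcard : Fintype.card F = 3 ^ (℘ ^ m).totient) :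
    IsLeast {w : ℕ | ∃ v : {y : F // y ≠ 0 ∧
          Algebra.trace (ZMod 3) F (y ^ ((Fintype.card F - 1) / ℘ ^ m)) = 0} → ZMod 3,
        (∀ x : F, ∑ d, v d * Algebra.trace (ZMod 3) F ((d : F) * x) = 0) ∧ v ≠ 0 ∧
        w = (Finset.univ.filter (fun d => v d ≠ 0)).card} 2 := by
  have : Fact (Nat.Prime 3) := ⟨Nat.prime_three⟩
  have hprim' : orderOf ((3 : ℕ) : ZMod (℘ ^ m)) = (℘ ^ m).totient := mod_cast hprim
  have hdvd : ℘ ^ m ∣ Fintype.card F - 1 := by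
    rw [hcard, ← Nat.modEq_iff_dvd' (Nat.one_le_pow _ _ three_pos), ← ZMod.natCast_eq_natCast_iff]
    push_cast
    rw [← hprim, pow_orderOf_eq_one]
  obtain ⟨g, hg⟩ := FiniteField.exists_orderOf_pow_card_sub_one_div_eq hdvd
  have htr := trace_eq_zero_of_orderOf_eq_prime_pow h℘ hm hprim' hg
  have heven : Even ((Fintype.card F - 1) / ℘ ^ m) := by
    have hq : Even (Fintype.card F - 1) := by
      rw [hcard]; exact Nat.Odd.sub_odd (Nat.odd_iff.mpr rfl).pow odd_one
    rw [← Nat.mul_div_cancel' hdvd, Nat.even_mul] at hq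
    exact hq.resolve_left (Nat.not_even_iff_odd.mpr h℘odd.pow)
  have : CharP F 3 := charP_of_injective_algebraMap (algebraMap (ZMod 3) F).injective 3
  have hneg : -(g : F) ≠ g := (Ring.eq_self_iff_eq_zero_of_char_ne_two
    (by rw [ringChar.eq F 3]; norm_num)).not.mpr g.ne_zero
  refine ⟨?_, ?_⟩
  · let D := {y : F // y ≠ 0 ∧ Algebra.trace (ZMod 3) F (y ^ ((Fintype.card F - 1) / ℘ ^ m)) = 0}
    obtain ⟨v, hv, hv0, hw⟩ := exists_dual_codeword_card_support_eq_two (K := ZMod 3)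
      (Subtype.val : D → F) (i := ⟨g, g.ne_zero, htr⟩)
      (j := ⟨-g, neg_ne_zero.mpr g.ne_zero, heven.neg_pow (g : F) ▸ htr⟩)
      (fun h => hneg (congrArg Subtype.val h).symm) rfl
    exact ⟨v, hv, hv0, hw.symm⟩
  · rintro w ⟨v, hv, hv0, rfl⟩
    exact two_le_card_support_of_dual_codeword Subtype.val (fun d => d.2.1) hv hv0
end

section
/- Let p be an odd prime, N a positive integer coprime to p with ord_N(p) = φ(N), q = p^{φ(N)}, and ξ ∈ 𝔽_q a primitive N-th root of unity. Then 𝔽_q = 𝔽_p(ξ), and {ξ, ξ², …, ξ^{φ(N)}} is an 𝔽_p-basis of 𝔽_q. -/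
/-! Every irreducible factor of `Φ_N` over `𝔽_p` has degree `ord_N(p) = φ(N)`, so `Φ_N` stays
irreducible and the minimal polynomial of `ξ` has degree `φ(N) = [𝔽_q : 𝔽_p]`. Hence `ξ` generates
`𝔽_q` and `1, ξ, …, ξ^{φ(N)-1}` is a basis; multiplying by `ξ ≠ 0` shifts it to
`ξ, …, ξ^{φ(N)}`. -/

open Polynomial

theorem Module.finrank_zmod_eq_of_card_eq_pow_s19 {p n : ℕ} [Fact p.Prime] {V : Type*}
    [AddCommGroup V] [Module (ZMod p) V] [Fintype V] (hcard : Fintype.card V = p ^ n) :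
    Module.finrank (ZMod p) V = n := by
  rw [Module.card_eq_pow_finrank (K := ZMod p), ZMod.card] at hcard
  exact Nat.pow_right_injective (Fact.out : p.Prime).two_le hcard

theorem IsPrimitiveRoot.minpoly_dvd_cyclotomic_of_field {K L : Type*} [Field K] [CommRing L]
    [IsDomain L] [Algebra K L] {N : ℕ} {ξ : L} (hξ : IsPrimitiveRoot ξ N) (hN : 0 < N) :
    minpoly K ξ ∣ cyclotomic N K := by
  apply minpoly.dvd
  rw [aeval_def, eval₂_eq_eval_map, map_cyclotomic]
  exact hξ.isRoot_cyclotomic hN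

theorem IsPrimitiveRoot.natDegree_minpoly_zmod {p N : ℕ} [Fact p.Prime] {F : Type*} [Field F]
    [Algebra (ZMod p) F] {ξ : F} (hξ : IsPrimitiveRoot ξ N) (hN : 0 < N) (hcop : p.Coprime N) :
    (minpoly (ZMod p) ξ).natDegree = orderOf (p : ZMod N) := by
  have hdeg := natDegree_of_dvd_cyclotomic_of_irreducible (f := 1)
    ((ZMod.card p).trans (pow_one p).symm) hcop
    (hξ.minpoly_dvd_cyclotomic_of_field hN)
    (minpoly.irreducible (hξ.isIntegral hN).tower_top)
  rw [hdeg, ← orderOf_units, ZMod.coe_unitOfCoprime, pow_one]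

theorem linearIndependent_pow_succ {K S : Type*} [Field K] [CommRing S] [IsDomain S]
    [Algebra K S] {x : S} (hx : x ≠ 0) :
    LinearIndependent K fun i : Fin (minpoly K x).natDegree => x ^ ((i : ℕ) + 1) := by
  simpa only [Function.comp_def, LinearMap.mulLeft_apply, pow_succ'] using
    (linearIndependent_pow x).map' (LinearMap.mulLeft K x)
      (LinearMap.ker_eq_bot.mpr (mul_right_injective₀ hx))

theorem Algebra.adjoin_simple_eq_top_of_natDegree_minpoly_eq_finrank {K L : Type*} [Field K]
    [Field L] [Algebra K L] [FiniteDimensional K L] {x : L}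
    (hx : (minpoly K x).natDegree = Module.finrank K L) : Algebra.adjoin K {x} = ⊤ :=
  (IntermediateField.adjoin_simple_eq_top_iff_of_isAlgebraic
    (Algebra.IsAlgebraic.isAlgebraic x)).mp
    ((Field.primitive_element_iff_minpoly_natDegree_eq K x).mpr hx)

theorem stmt_19_general (p N : ℕ) (hp : p.Prime) (hN : 0 < N)
    (hcop : Nat.Coprime p N) (hprim : orderOf (p : ZMod N) = N.totient)
    (F : Type*) [Field F] [Fintype F] [Algebra (ZMod p) F]
    (hcard : Fintype.card F = p ^ N.totient)
    (ξ : F) (hξ : IsPrimitiveRoot ξ N) :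
    Algebra.adjoin (ZMod p) {ξ} = ⊤ ∧
    LinearIndependent (ZMod p) (fun i : Fin N.totient => ξ ^ ((i : ℕ) + 1)) ∧
    Submodule.span (ZMod p) (Set.range (fun i : Fin N.totient => ξ ^ ((i : ℕ) + 1))) = ⊤ := by
  have : Fact p.Prime := ⟨hp⟩
  have hfinrank : Module.finrank (ZMod p) F = N.totient :=
    Module.finrank_zmod_eq_of_card_eq_pow_s19 hcard
  have hdeg : (minpoly (ZMod p) ξ).natDegree = N.totient := by
    rw [hξ.natDegree_minpoly_zmod hN hcop, hprim]
  have hli : LinearIndependent (ZMod p) fun i : Fin N.totient => ξ ^ ((i : ℕ) + 1) := by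
    rw [← hdeg]
    exact linearIndependent_pow_succ (hξ.ne_zero hN.ne')
  refine ⟨Algebra.adjoin_simple_eq_top_of_natDegree_minpoly_eq_finrank (hdeg.trans hfinrank.symm),
    hli, hli.span_eq_top_of_card_eq_finrank' ?_⟩
  rw [Fintype.card_fin, hfinrank]

theorem stmt_19 (p N : ℕ) (hp : p.Prime) (hpodd : Odd p) (hN : 0 < N)
    (hcop : Nat.Coprime p N) (hprim : orderOf (p : ZMod N) = N.totient)
    (F : Type*) [Field F] [Fintype F] [Algebra (ZMod p) F]
    (hcard : Fintype.card F = p ^ N.totient)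
    (ξ : F) (hξ : IsPrimitiveRoot ξ N) :
    Algebra.adjoin (ZMod p) {ξ} = ⊤ ∧
    LinearIndependent (ZMod p) (fun i : Fin N.totient => ξ ^ ((i : ℕ) + 1)) ∧
    Submodule.span (ZMod p) (Set.range (fun i : Fin N.totient => ξ ^ ((i : ℕ) + 1))) = ⊤ :=
  stmt_19_general p N hp hN hcop hprim F hcard ξ hξ
end
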